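/- arXiv:1311.1952 — 4 statements merged into one kernel-verified Lean document; each statement's English description precedes it below -/
import Mathlib

section
/- Let M be a manifold with density f = e^ψ with locally convex boundary (II ≥ 0) and nonnegative Bakry–Émery–Ricci curvature (Ric_f ≥ 0). A smooth compact oriented f-stationary hypersurface Σ (with int(Σ)⊂int(M), ∂Σ⊂∂M) is strongly f-stable if and only if Σ is totally geodesic, Ric_f(N,N) = 0 on Σ, and II(N,N) = 0 along ∂Σ. -/
open MeasureTheory
open scoped RealInnerProductSpace

lemma cont_integrable_of_compact {X : Type*} [TopologicalSpace X] [MeasurableSpace X]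
    [BorelSpace X] [CompactSpace X] (μ : Measure X) [IsFiniteMeasure μ] {f : X → ℝ}
    (hf : Continuous f) : Integrable f μ := by
  have := hf.continuousOn.integrableOn_compact' (μ := μ) isCompact_univ MeasurableSet.univ
  rwa [integrableOn_univ] at this

/-- if M has locally convex boundary (II ≥ 0) and nonnegative
Bakry–Émery–Ricci curvature (Ric_f ≥ 0), then a compact f-stationary hypersurface Σ
is strongly f-stable iff Σ is totally geodesic (`|σ|² = 0`), `Ric_f(N,N) = 0` on Σ
and `II(N,N) = 0` along ∂Σ.  `S` models the compact Σ with weighted area measure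
`μf`, `B` its boundary with weighted length measure `νf` (inclusion `ι`); `R`, `σ2`,
`IIN` are the continuous functions `Ric_f(N,N)`, `|σ|²`, `II(N,N)`; `gradsq u` is
`|∇_Σ u|²` (vanishing on constants, nonnegative).  Strong f-stability is
nonnegativity of the f-index form `I_f(u,u)` on all (smooth) functions u. -/
theorem stmt7 {S B : Type*}
    [TopologicalSpace S] [MeasurableSpace S] [BorelSpace S] [CompactSpace S]
    [TopologicalSpace B] [MeasurableSpace B] [BorelSpace B] [CompactSpace B]
    (μf : Measure S) (νf : Measure B) [IsFiniteMeasure μf] [IsFiniteMeasure νf]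
    [μf.IsOpenPosMeasure] [νf.IsOpenPosMeasure]
    (ι : B → S)
    (R σ2 : S → ℝ) (IIN : B → ℝ)
    (hRc : Continuous R) (hσc : Continuous σ2) (hIIc : Continuous IIN)
    (hR : ∀ p, 0 ≤ R p) (hσ : ∀ p, 0 ≤ σ2 p) (hII : ∀ b, 0 ≤ IIN b)
    (gradsq : (S → ℝ) → S → ℝ)
    (hg0 : ∀ c : ℝ, ∀ p, gradsq (fun _ => c) p = 0)
    (hgnn : ∀ u p, 0 ≤ gradsq u p) :
    (∀ u : S → ℝ, Continuous u →
        0 ≤ ∫ p, (gradsq u p - (R p + σ2 p) * u p ^ 2) ∂μf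
            - ∫ b, IIN b * (u (ι b)) ^ 2 ∂νf)
      ↔ ((∀ p, σ2 p = 0) ∧ (∀ p, R p = 0) ∧ (∀ b, IIN b = 0)) := by
  constructor
  · intro h
    have h1 := h (fun _ => 1) continuous_const
    simp only [hg0, one_pow, mul_one, zero_sub] at h1
    rw [integral_neg] at h1
    -- h1 : 0 ≤ -∫ (R+σ2) - ∫ IIN
    have hint : Integrable (fun p => R p + σ2 p) μf := cont_integrable_of_compact μf (hRc.add hσc)
    have hintB : Integrable IIN νf := cont_integrable_of_compact νf hIIc
    have hA : 0 ≤ ∫ p, (R p + σ2 p) ∂μf :=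
      integral_nonneg fun p => add_nonneg (hR p) (hσ p)
    have hB : 0 ≤ ∫ b, IIN b ∂νf := integral_nonneg hII
    have hA0 : ∫ p, (R p + σ2 p) ∂μf = 0 := by linarith
    have hB0 : ∫ b, IIN b ∂νf = 0 := by linarith
    have hAe : (fun p => R p + σ2 p) = fun _ => 0 := by
      have := (integral_eq_zero_iff_of_nonneg (fun p => add_nonneg (hR p) (hσ p)) hint).mp hA0
      exact ((hRc.add hσc).ae_eq_iff_eq μf continuous_const).mp this
    have hBe : IIN = fun _ => 0 := by
      have := (integral_eq_zero_iff_of_nonneg hII hintB).mp hB0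
      exact (hIIc.ae_eq_iff_eq νf continuous_const).mp this
    refine ⟨fun p => ?_, fun p => ?_, fun b => congrFun hBe b⟩
    · have := congrFun hAe p
      have := hR p; have := hσ p
      linarith [congrFun hAe p]
    · have := hR p; have := hσ p
      linarith [congrFun hAe p]
  · rintro ⟨hσ0, hR0, hII0⟩ u hu
    simp only [hσ0, hR0, hII0, add_zero, zero_mul, sub_zero, zero_mul,
      integral_zero]
    exact integral_nonneg fun p => hgnn u p
end

section
/- If M is a manifold with density, Ric_f > 0 everywhere (or II > 0 everywhere on ∂M), then M contains no compact strongly f-stable hypersurface Σ with int(Σ) ⊂ int(M) and ∂Σ ⊂ ∂M (and in the second case ∂Σ nonempty). -/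
open MeasureTheory

lemma stmt8_aux_pos {S : Type*} [TopologicalSpace S] [MeasurableSpace S] [BorelSpace S]
    [CompactSpace S] (μ : Measure S) [IsFiniteMeasure μ] (hμ : μ ≠ 0)
    (f : S → ℝ) (hf : Continuous f) (hpos : ∀ p, 0 < f p) :
    0 < ∫ p, f p ∂μ := by
  have hint : Integrable f μ :=
    hf.integrable_of_hasCompactSupport (HasCompactSupport.of_compactSpace f)
  rw [integral_pos_iff_support_of_nonneg (fun p => (hpos p).le) hint]
  have : Function.support f = Set.univ := by
    ext p; simp [(hpos p).ne']
  rw [this]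
  simpa [Measure.measure_univ_pos] using hμ

/-- if `Ric_f > 0` everywhere (or `II > 0` everywhere on ∂M and Σ has
nonempty boundary), then M contains no compact strongly f-stable hypersurface Σ.
`S` models a candidate compact hypersurface Σ with weighted area measure `μf ≠ 0`,
`B` its boundary with weighted length measure `νf` (inclusion `ι`); `R`, `σ2`, `IIN`
are `Ric_f(N,N)`, `|σ|²`, `II(N,N)` along Σ; `gradsq u = |∇_Σ u|²`.  Assuming
`Ric_f ≥ 0` and `II ≥ 0` with one of them strictly positive (in the second case
the boundary is nonempty, i.e. `νf ≠ 0`), the f-index form must take a negative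
value, i.e. Σ cannot be strongly f-stable. -/
theorem stmt8 {S B : Type*}
    [TopologicalSpace S] [MeasurableSpace S] [BorelSpace S] [CompactSpace S]
    [TopologicalSpace B] [MeasurableSpace B] [BorelSpace B] [CompactSpace B]
    (μf : Measure S) (νf : Measure B) [IsFiniteMeasure μf] [IsFiniteMeasure νf]
    (hμ : μf ≠ 0)
    (ι : B → S)
    (R σ2 : S → ℝ) (IIN : B → ℝ)
    (hRc : Continuous R) (hσc : Continuous σ2) (hIIc : Continuous IIN)
    (hR : ∀ p, 0 ≤ R p) (hσ : ∀ p, 0 ≤ σ2 p) (hII : ∀ b, 0 ≤ IIN b)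
    (hpos : (∀ p, 0 < R p) ∨ ((∀ b, 0 < IIN b) ∧ νf ≠ 0))
    (gradsq : (S → ℝ) → S → ℝ)
    (hg0 : ∀ c : ℝ, ∀ p, gradsq (fun _ => c) p = 0) :
    ¬ (∀ u : S → ℝ, Continuous u →
        0 ≤ ∫ p, (gradsq u p - (R p + σ2 p) * u p ^ 2) ∂μf
            - ∫ b, IIN b * (u (ι b)) ^ 2 ∂νf) := by
  intro h
  have h1 := h (fun _ => 1) continuous_const
  simp only [hg0, one_pow, mul_one, zero_sub] at h1
  have hI1 : ∫ p, -(R p + σ2 p) ∂μf = -∫ p, (R p + σ2 p) ∂μf := integral_neg _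
  rw [hI1] at h1
  have hA : 0 ≤ ∫ p, (R p + σ2 p) ∂μf :=
    integral_nonneg fun p => add_nonneg (hR p) (hσ p)
  have hB : 0 ≤ ∫ b, IIN b ∂νf := integral_nonneg hII
  rcases hpos with hRpos | ⟨hIIpos, hν⟩
  · have : 0 < ∫ p, (R p + σ2 p) ∂μf :=
      stmt8_aux_pos μf hμ _ (hRc.add hσc) (fun p => lt_of_lt_of_le (hRpos p) (by linarith [hσ p]))
    linarith
  · have : 0 < ∫ b, IIN b ∂νf := stmt8_aux_pos νf hν _ hIIc hIIpos
    linarith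
end

section
/- Let Σ be an oriented surface immersed in a Riemannian 3-manifold M with density f = e^ψ, with unit normal N, mean curvature H, Gauss curvature K, second fundamental form σ. Then on Σ the identity Ric_f(N,N) + |σ|² = (1/2)(S_f + H_f²) + (1/2)(|σ|² + |∇_Σψ|²) - K + Δ_Σψ holds, where S_f = S - 2Δψ - |∇ψ|² and H_f = 2H - ⟨∇ψ,N⟩. -/
/-- the Gauss equation rearrangement on a surface Σ in a weighted
3-manifold.  For each point `p` of Σ, `RicN = Ric(N,N)`, `HessN = ∇²ψ(N,N)`,
`lapψ = Δψ`, `lapSψ = Δ_Σψ`, `gpN = ⟨∇ψ,N⟩`, `gp2 = |∇ψ|²`, `gS2 = |∇_Σψ|²`,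
`K` is the Gauss curvature, `H` the mean curvature, `σ2 = |σ|²` and `Scal` the
ambient scalar curvature.  Assuming (as the paper allows) the traced Gauss equation,
the splitting `Δψ = Δ_Σψ - 2H⟨∇ψ,N⟩ + ∇²ψ(N,N)` and the orthogonal decomposition
`|∇ψ|² = |∇_Σψ|² + ⟨∇ψ,N⟩²` coming from `∇ψ = ∇_Σψ + ⟨∇ψ,N⟩N`, the identity
`Ric_f(N,N) + |σ|² = ½(S_f + H_f²) + ½(|σ|² + |∇_Σψ|²) - K + Δ_Σψ` holds on Σ,
where `Ric_f(N,N) = Ric(N,N) - ∇²ψ(N,N)`, `S_f = S - 2Δψ - |∇ψ|²` and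
`H_f = 2H - ⟨∇ψ,N⟩`. -/
theorem stmt9 {Sg : Type*}
    (RicN HessN lapψ lapSψ gpN gp2 gS2 K H σ2 Scal : Sg → ℝ)
    (hGauss : ∀ p, RicN p + σ2 p
        = (1/2) * Scal p + 2 * H p ^ 2 + (1/2) * σ2 p - K p)
    (hsplit : ∀ p, lapψ p = lapSψ p - 2 * H p * gpN p + HessN p)
    (hdecomp : ∀ p, gp2 p = gS2 p + gpN p ^ 2)
    (Ricf Sf Hf : Sg → ℝ)
    (hRicf : ∀ p, Ricf p = RicN p - HessN p)
    (hSf : ∀ p, Sf p = Scal p - 2 * lapψ p - gp2 p)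
    (hHf : ∀ p, Hf p = 2 * H p - gpN p) :
    ∀ p, Ricf p + σ2 p
      = (1/2) * (Sf p + Hf p ^ 2) + (1/2) * (σ2 p + gS2 p) - K p + lapSψ p := by
  intro p
  have h1 := hGauss p; have h2 := hsplit p; have h3 := hdecomp p
  rw [hRicf, hSf, hHf]
  nlinarith [h1, h2, h3]
end

section
/- Let H: [0,ε) → ℝ be C¹ with H(0) = 0, and suppose there exist continuous positive functions φ, η on [0,ε) and a constant S₀ < 0 such that H'(s) ≥ -(S₀/(2φ(s))) ∫₀^s H(t) η(t) dt for all s, and -C S₀ ε < 2 where C = max_{s∈[0,ε]} φ(s)^{-1}∫₀^s η(t)dt. Then H(t) ≥ 0 for all t ∈ [0,ε), and consequently H'(s) ≥ 0 for all s ∈ [0,ε). -/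
open Set intervalIntegral

/-- the ODE-comparison step in the rigidity theorem for negative
curvature bound.  `H` is C¹ on `[0,ε)` with `H(0) = 0`; `φ, η` are continuous and
positive on `[0,ε]`; `S₀ < 0`; for every `s ∈ [0,ε)`,
`H'(s) ≥ -(S₀/(2φ(s))) ∫₀^s H(t)η(t) dt`; and `C` bounds `φ(s)⁻¹∫₀^s η` on `[0,ε]`
(it is their maximum) with `-C S₀ ε < 2`.  Then `H ≥ 0` on `[0,ε)` and consequently
`H' ≥ 0` on `[0,ε)`. -/
theorem stmt18 (ε : ℝ) (hε : 0 < ε) (H φ η : ℝ → ℝ)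
    (hH1 : ContDiffOn ℝ 1 H (Set.Ico 0 ε))
    (hH0 : H 0 = 0)
    (hφ : ContinuousOn φ (Set.Icc 0 ε)) (hη : ContinuousOn η (Set.Icc 0 ε))
    (hφpos : ∀ s ∈ Set.Icc 0 ε, 0 < φ s) (hηpos : ∀ s ∈ Set.Icc 0 ε, 0 < η s)
    (S₀ : ℝ) (hS : S₀ < 0) (C : ℝ)
    (hC : IsGreatest ((fun s => (φ s)⁻¹ * ∫ t in (0:ℝ)..s, η t) '' Set.Icc 0 ε) C)
    (hCε : -C * S₀ * ε < 2)
    (hineq : ∀ s ∈ Set.Ico 0 ε,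
      deriv H s ≥ -(S₀ / (2 * φ s)) * ∫ t in (0:ℝ)..s, H t * η t) :
    (∀ t ∈ Set.Ico 0 ε, 0 ≤ H t) ∧ (∀ s ∈ Set.Ico 0 ε, 0 ≤ deriv H s) := by
  have hHcont : ContinuousOn H (Set.Ico 0 ε) := hH1.continuousOn
  have hHdiff : DifferentiableOn ℝ H (Set.Ico 0 ε) := hH1.differentiableOn one_ne_zero
  have hC0 : 0 ≤ C := by
    have h0mem : (0:ℝ) ∈ (fun s => (φ s)⁻¹ * ∫ t in (0:ℝ)..s, η t) '' Set.Icc 0 ε :=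
      ⟨0, ⟨le_rfl, hε.le⟩, by simp⟩
    exact hC.2 h0mem
  have key : ∀ t ∈ Set.Ico 0 ε, 0 ≤ H t := by
    by_contra h
    push_neg at h
    obtain ⟨t₀, ht₀, ht₀neg⟩ := h
    have hsub : Set.Icc 0 t₀ ⊆ Set.Ico 0 ε := fun x hx => ⟨hx.1, lt_of_le_of_lt hx.2 ht₀.2⟩
    obtain ⟨τ, hτmem, hτmin⟩ :=
      isCompact_Icc.exists_isMinOn (Set.nonempty_Icc.mpr ht₀.1) (hHcont.mono hsub)
    set m := H τ with hm
    have hmneg : m < 0 := lt_of_le_of_lt (hτmin ⟨ht₀.1, le_rfl⟩) ht₀neg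
    have hτpos : 0 < τ := by
      rcases hτmem.1.lt_or_eq with h | h
      · exact h
      · exfalso; rw [← h] at hm; rw [hm, hH0] at hmneg; exact lt_irrefl 0 hmneg
    have hτlt : τ < ε := lt_of_le_of_lt hτmem.2 ht₀.2
    have hcont : ContinuousOn H (Set.Icc 0 τ) :=
      hHcont.mono (fun x hx => ⟨hx.1, lt_of_le_of_lt hx.2 hτlt⟩)
    have hderivAt : ∀ x ∈ Set.Ioo 0 τ, HasDerivAt H (deriv H x) x := by
      intro x hx
      have hx' : x ∈ Set.Ioo 0 ε := ⟨hx.1, hx.2.trans hτlt⟩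
      exact (hHdiff.differentiableAt (Ico_mem_nhds hx'.1 hx'.2)).hasDerivAt
    obtain ⟨ξ, hξ, hξeq⟩ := exists_hasDerivAt_eq_slope H (deriv H) hτpos hcont hderivAt
    have hξIco : ξ ∈ Set.Ico 0 ε := ⟨hξ.1.le, hξ.2.trans hτlt⟩
    have hξIcc : ξ ∈ Set.Icc 0 ε := ⟨hξ.1.le, (hξ.2.trans hτlt).le⟩
    have hφξ : 0 < φ ξ := hφpos ξ hξIcc
    have hsubξ : Set.Icc 0 ξ ⊆ Set.Icc 0 ε :=
      Set.Icc_subset_Icc le_rfl (hξ.2.trans hτlt).le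
    have huIcc : Set.uIcc (0:ℝ) ξ = Set.Icc 0 ξ := Set.uIcc_of_le hξ.1.le
    have hint1 : IntervalIntegrable (fun t => H t * η t) MeasureTheory.volume 0 ξ := by
      apply ContinuousOn.intervalIntegrable
      rw [huIcc]
      exact ((hHcont.mono (fun x hx => ⟨hx.1, lt_of_le_of_lt hx.2 (hξ.2.trans hτlt)⟩)).mul
        (hη.mono hsubξ))
    have hint2 : IntervalIntegrable (fun t => m * η t) MeasureTheory.volume 0 ξ := by
      apply ContinuousOn.intervalIntegrable
      rw [huIcc]
      exact continuousOn_const.mul (hη.mono hsubξ)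
    have hmono : (∫ t in (0:ℝ)..ξ, m * η t) ≤ ∫ t in (0:ℝ)..ξ, H t * η t := by
      apply intervalIntegral.integral_mono_on hξ.1.le hint2 hint1
      intro t ht
      have htτ : t ∈ Set.Icc 0 t₀ := ⟨ht.1, ht.2.trans (hξ.2.le.trans hτmem.2)⟩
      exact mul_le_mul_of_nonneg_right (hτmin htτ) (hηpos t (hsubξ ht)).le
    have hconst : (∫ t in (0:ℝ)..ξ, m * η t) = m * ∫ t in (0:ℝ)..ξ, η t := by
      simp [intervalIntegral.integral_const_mul]
    set I := ∫ t in (0:ℝ)..ξ, η t with hI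
    have hCI : (φ ξ)⁻¹ * I ≤ C := hC.2 ⟨ξ, hξIcc, rfl⟩
    set K := -S₀ * C / 2 with hK
    have hKnn : 0 ≤ K := by
      apply div_nonneg _ (by norm_num)
      exact mul_nonneg (by linarith) hC0
    have h1 := hineq ξ hξIco
    have hcpos : 0 ≤ -(S₀ / (2 * φ ξ)) := by
      rw [← neg_div]
      exact (div_pos (by linarith) (by linarith)).le
    have hstep1 : -(S₀ / (2 * φ ξ)) * (∫ t in (0:ℝ)..ξ, H t * η t)
        ≥ -(S₀ / (2 * φ ξ)) * (m * I) := by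
      apply mul_le_mul_of_nonneg_left _ hcpos
      rw [← hconst]; exact hmono
    have heq2 : -(S₀ / (2 * φ ξ)) * (m * I) = m * ((-S₀ / 2) * ((φ ξ)⁻¹ * I)) := by
      field_simp
    have hstep2 : m * ((-S₀ / 2) * ((φ ξ)⁻¹ * I)) ≥ m * ((-S₀ / 2) * C) := by
      apply mul_le_mul_of_nonpos_left _ hmneg.le
      exact mul_le_mul_of_nonneg_left hCI (by linarith)
    have hKeq : m * ((-S₀ / 2) * C) = m * K := by rw [hK]; ring
    have hlow : deriv H ξ ≥ m * K := by
      rw [← hKeq]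
      calc deriv H ξ ≥ -(S₀ / (2 * φ ξ)) * (∫ t in (0:ℝ)..ξ, H t * η t) := h1
        _ ≥ -(S₀ / (2 * φ ξ)) * (m * I) := hstep1
        _ = m * ((-S₀ / 2) * ((φ ξ)⁻¹ * I)) := heq2
        _ ≥ m * ((-S₀ / 2) * C) := hstep2
    have hslope : deriv H ξ * τ = m := by
      rw [hξeq, hH0]
      rw [sub_zero, sub_zero, div_mul_cancel₀ _ hτpos.ne']
    have hlow' : m * K ≤ deriv H ξ := hlow
    have hmτ : m ≥ m * K * τ := by
      have h2 : m * K * τ ≤ deriv H ξ * τ := mul_le_mul_of_nonneg_right hlow' hτpos.le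
      linarith [hslope]
    have hKτε : K * τ ≤ K * ε := mul_le_mul_of_nonneg_left hτlt.le hKnn
    have hKε : K * ε < 1 := by
      rw [hK]; nlinarith
    nlinarith [mul_pos (neg_pos.mpr hmneg) (by linarith : (0:ℝ) < 1 - K * τ)]
  refine ⟨key, fun s hs => ?_⟩
  have hintnn : 0 ≤ ∫ t in (0:ℝ)..s, H t * η t := by
    apply intervalIntegral.integral_nonneg hs.1
    intro u hu
    have huIco : u ∈ Set.Ico 0 ε := ⟨hu.1, lt_of_le_of_lt hu.2 hs.2⟩
    exact mul_nonneg (key u huIco) (hηpos u ⟨hu.1, (lt_of_le_of_lt hu.2 hs.2).le⟩).le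
  have hφs : 0 < φ s := hφpos s ⟨hs.1, hs.2.le⟩
  have := hineq s hs
  have hcoef : 0 < -(S₀ / (2 * φ s)) := by
    rw [← neg_div]
    exact div_pos (by linarith) (by linarith)
  have hpos : 0 ≤ -(S₀ / (2 * φ s)) * ∫ t in (0:ℝ)..s, H t * η t :=
    mul_nonneg hcoef.le hintnn
  linarith
end
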